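/- Let (X, ρ, μ) be a compact Ahlfors t-regular metric probability space, (r_n) decreasing to 0, and x_n i.i.d. with law μ. Suppose F ⊂ X is compact, and for every open set V with V ∩ F ≠ ∅ one has dim_B(V ∩ F) > t − α where α = min{t, limsup (log n)/(−log r_n)}, and suppose the technical condition (C) holds: there is an increasing sequence (k_i) of positive integers with k_{i+1}/k_i → 1 and (log₂ n_{k_i})/k_i → α, where n_k = #{n : 2^{−(k+1)} ≤ r_n < 2^{−k}}. Then almost surely, for every open set V with V ∩ F ≠ ∅, the open ball U(x_n, r_n) intersects V ∩ F for infinitely many n. -/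

import Mathlib

open MeasureTheory ProbabilityTheory Filter Metric Set
open scoped ENNReal

/-- The least number of `ε`-balls needed to cover `F` (as an extended natural number). -/
noncomputable def coverNumber {X : Type*} [MetricSpace X] (F : Set X) (ε : ℝ) : ℕ∞ :=
  ⨅ (s : Finset X) (_ : F ⊆ ⋃ x ∈ s, Metric.ball x ε), (s.card : ℕ∞)

/-- The upper box-counting (Minkowski) dimension of `F`:
`limsup_{ε → 0⁺} log N(F, ε) / log (1/ε)`. -/
noncomputable def upperBoxDim {X : Type*} [MetricSpace X] (F : Set X) : ℝ≥0∞ :=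
  Filter.limsup
    (fun ε : ℝ => ENNReal.ofReal (Real.log ((coverNumber F ε).toNat) / Real.log (1 / ε)))
    (nhdsWithin 0 (Set.Ioi 0))

/-!
For an open `V` meeting `F` put `E = V ∩ F`; the ball `U(xₙ, rₙ)` meets `E` exactly when `xₙ`
lies in the `rₙ`-thickening `E_{rₙ}`. By the second Borel–Cantelli lemma it therefore suffices
that `∑ μ(E_{rₙ}) = ∞`, and a countable basis of `X` handles all `V` at once.

A maximal `ρ/2`-separated subset of `E` and lower Ahlfors regularity give
`μ(E_ρ) ≳ N(E, ρ) ρ^t`. The `n_k` indices with `2^{-(k+1)} ≤ rₙ < 2^{-k}` thus contribute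
`≳ n_k N(E, 2^{-(k+1)}) 2^{-kt}`. Along `k = kᵢ` we have `n_k ≈ 2^{αk}`, and since
`dim_B E > t - α` there are infinitely many `i` with `N(E, 2^{-k_{i+1}}) ≥ 2^{s kᵢ}` for some
`s > t - α`; as `k_{i+1} ≈ kᵢ`, these contributions are unbounded. The same packing bound gives
`dim_B E ≤ t`, which rules out `α = 0`.
-/

open scoped NNReal Topology

lemma exists_ge_mem_Ioc_of_tendsto_zero {u : ℕ → ℝ} (hu : Tendsto u atTop (𝓝 0)) {ε : ℝ}
    (hε : 0 < ε) {j₀ : ℕ} (hj₀ : ε ≤ u j₀) : ∃ j ≥ j₀, u (j + 1) < ε ∧ ε ≤ u j := by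
  by_contra! H
  have hle : ∀ j ≥ j₀, ε ≤ u j := fun j hj =>
    Nat.le_induction hj₀ (fun i hi hεi => le_of_not_gt fun h => (H i hi h).not_ge hεi) j hj
  obtain ⟨j, hj, hj₀⟩ := ((hu.eventually (gt_mem_nhds hε)).and (eventually_ge_atTop j₀)).exists
  exact (hle j hj₀).not_gt hj

lemma tendsto_inv_two_pow_comp {k : ℕ → ℕ} (hk : Tendsto k atTop atTop) :
    Tendsto (fun j => ((2:ℝ) ^ k j)⁻¹) atTop (𝓝 0) :=
  (tendsto_inv_atTop_zero.comp (tendsto_pow_atTop_atTop_of_one_lt one_lt_two)).comp hk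

lemma frequently_mul_le_of_tendsto_ratio {k : ℕ → ℕ}
    (hkratio : Tendsto (fun i => (k (i + 1) : ℝ) / (k i : ℝ)) atTop (𝓝 1)) {b : ℕ → ℝ}
    {s s' : ℝ} (hs' : 0 < s') (hss' : s' < s) (hb : ∃ᶠ j in atTop, s * k j ≤ b (j + 1)) :
    ∃ᶠ j in atTop, s' * k j ≤ b j := by
  have hratio : ∀ᶠ j in atTop, (k (j + 1) : ℝ) / k j ∈ Ioo 0 (s / s') :=
    hkratio.eventually (Ioo_mem_nhds one_pos ((one_lt_div hs').2 hss'))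
  refine (tendsto_add_atTop_nat 1).frequently ((hb.and_eventually hratio).mono ?_)
  rintro j ⟨hbj, hpos, hlt⟩
  -- A positive ratio forces `k j ≠ 0`, since division by `0` gives `0`.
  have hkj : (0 : ℝ) < k j :=
    ((div_pos_iff.1 hpos).resolve_right fun h => (Nat.cast_nonneg _).not_gt h.1).2
  rw [div_lt_iff₀ hkj, div_mul_eq_mul_div, lt_div_iff₀ hs'] at hlt
  linarith

lemma frequently_le_add_sub_mul {κ a b : ℕ → ℝ} {α s t : ℝ} (hκ : Tendsto κ atTop atTop)
    (ha : Tendsto (fun j => a j / κ j) atTop (𝓝 α)) (hα : 0 < α) (hs : 0 < s)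
    (hb : ∃ᶠ j in atTop, s * κ j ≤ b j) (hst : t < α + s) (M : ℝ) :
    ∃ᶠ j in atTop, 0 < a j ∧ 0 < b j ∧ M ≤ a j + b j - t * κ j := by
  refine (hb.and_eventually ((hκ.eventually_gt_atTop 0).and ((ha.eventually (lt_mem_nhds hα)).and
    ((ha.eventually (lt_mem_nhds (by linarith : α - (α + s - t) / 2 < α))).and
    ((hκ.const_mul_atTop (by linarith : 0 < (α + s - t) / 2)).eventually_ge_atTop M))))).mono ?_
  rintro j ⟨hbj, hκj, ha0, haj, hMj⟩
  rw [lt_div_iff₀ hκj, zero_mul] at ha0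
  rw [lt_div_iff₀ hκj] at haj
  exact ⟨ha0, by nlinarith, by linarith⟩

lemma ncard_mul_le_tsum {ι : Type*} {f : ι → ℝ≥0∞} {S : Set ι} {c : ℝ≥0∞}
    (h : ∀ n ∈ S, c ≤ f n) : S.ncard * c ≤ ∑' n, f n := by
  rcases S.finite_or_infinite with hS | hS
  · rw [ncard_eq_toFinset_card S hS, ← nsmul_eq_mul]
    exact (Finset.card_nsmul_le_sum _ _ _ fun n hn => h n (hS.mem_toFinset.1 hn)).trans
      (ENNReal.sum_le_tsum _)
  · simp [hS.ncard]

section CoverNumber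

variable {X : Type*} [MetricSpace X]

lemma coverNumber_le_card {E : Set X} {ε : ℝ} {s : Finset X} (h : E ⊆ ⋃ x ∈ s, ball x ε) :
    coverNumber E ε ≤ s.card :=
  iInf₂_le s h

lemma coverNumber_anti (E : Set X) {ε ε' : ℝ} (h : ε ≤ ε') :
    coverNumber E ε' ≤ coverNumber E ε :=
  le_iInf₂ fun _ hs => coverNumber_le_card (hs.trans (iUnion₂_mono fun _ _ => ball_subset_ball h))

lemma coverNumber_ne_top [CompactSpace X] (E : Set X) {ε : ℝ} (hε : 0 < ε) :
    coverNumber E ε ≠ ⊤ := by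
  obtain ⟨s, -, hcov⟩ := (isCompact_univ (X := X)).elim_nhds_subcover (fun x => ball x ε)
    fun x _ => ball_mem_nhds x hε
  exact ne_top_of_le_ne_top (ENat.natCast_ne_top s.card)
    (coverNumber_le_card ((subset_univ E).trans hcov))

lemma toNat_coverNumber_anti [CompactSpace X] (E : Set X) {ε ε' : ℝ} (hε : 0 < ε) (h : ε ≤ ε') :
    (coverNumber E ε').toNat ≤ (coverNumber E ε).toNat :=
  ENat.toNat_le_toNat (coverNumber_anti E h) (coverNumber_ne_top E hε)

lemma packingNumber_ne_top [CompactSpace X] (E : Set X) {ε : ℝ≥0} (hε : ε ≠ 0) :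
    packingNumber ε E ≠ ⊤ := by
  obtain ⟨N, -, hN, hcov⟩ := exists_finite_isCover_of_isCompact (ε := ε / 2)
    (by simpa using hε) (isCompact_univ (X := X))
  have h := (packingNumber_two_mul_le_externalCoveringNumber (ε / 2) E).trans
    ((hcov.anti (subset_univ E)).externalCoveringNumber_le_encard)
  rw [mul_div_cancel₀ _ two_ne_zero] at h
  exact ne_top_of_le_ne_top hN.encard_lt_top.ne h

lemma exists_separated_ball_cover [CompactSpace X] (E : Set X) {ρ : ℝ} (hρ : 0 < ρ) :
    ∃ Y : Finset X, ↑Y ⊆ E ∧ (Y : Set X).Pairwise (fun a b => ρ / 2 < dist a b) ∧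
      E ⊆ ⋃ y ∈ Y, ball y ρ := by
  set ε : ℝ≥0 := (ρ / 2).toNNReal
  have hε : ε ≠ 0 := (Real.toNNReal_pos.2 (half_pos hρ)).ne'
  have hpack := packingNumber_ne_top E hε
  have hfin : (maximalSeparatedSet ε E).Finite :=
    encard_ne_top_iff.1 (by rwa [encard_maximalSeparatedSet hpack])
  refine ⟨hfin.toFinset, by simpa using maximalSeparatedSet_subset, ?_, ?_⟩
  · intro a ha b hb hab
    have : ENNReal.ofReal (ρ / 2) < edist a b :=
      isSeparated_maximalSeparatedSet (hfin.mem_toFinset.1 ha) (hfin.mem_toFinset.1 hb) hab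
    rwa [edist_dist, ENNReal.ofReal_lt_ofReal_iff (dist_pos.2 hab)] at this
  · refine (isCover_iff_subset_iUnion_closedBall.1 (isCover_maximalSeparatedSet hpack)).trans ?_
    simp only [Finite.mem_toFinset]
    exact iUnion₂_mono fun y _ => closedBall_subset_ball (by simp [ε]; linarith)

lemma frequently_mul_le_logb_coverNumber [CompactSpace X] {E : Set X} {s : ℝ} (hs : 0 ≤ s)
    (hE : ENNReal.ofReal s < upperBoxDim E) {k : ℕ → ℕ} (hk : Tendsto k atTop atTop) :
    ∃ᶠ j in atTop, s * k j ≤ Real.logb 2 (coverNumber E ((2:ℝ) ^ (k (j + 1) + 1))⁻¹).toNat := by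
  have hfreq : ∃ᶠ ε in 𝓝[>] (0 : ℝ), s < Real.log (coverNumber E ε).toNat / Real.log (1 / ε) :=
    (frequently_lt_of_lt_limsup (by isBoundedDefault) hE).mono fun ε h =>
      (ENNReal.ofReal_lt_ofReal_iff_of_nonneg hs).1 h
  rw [frequently_atTop]
  intro j₀
  obtain ⟨ε, hεs, hε0, hεj₀⟩ :=
    (hfreq.and_eventually (Ioo_mem_nhdsGT (by positivity : (0:ℝ) < ((2:ℝ) ^ k j₀)⁻¹))).exists
  obtain ⟨j, hj, hj1, hjε⟩ :=
    exists_ge_mem_Ioc_of_tendsto_zero (tendsto_inv_two_pow_comp hk) hε0 hεj₀.le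
  refine ⟨j, hj, ?_⟩
  have hlog : 0 < Real.log (1 / ε) :=
    Real.log_pos (one_lt_one_div hε0
      (hεj₀.trans_le (inv_le_one_of_one_le₀ (one_le_pow₀ one_le_two))))
  have hlogε : k j * Real.log 2 ≤ Real.log (1 / ε) := by
    rw [← Real.log_pow, one_div]
    exact Real.log_le_log (by positivity) ((le_inv_comm₀ hε0 (by positivity)).1 hjε)
  have hsN : s * Real.log (1 / ε) < Real.log (coverNumber E ε).toNat := (lt_div_iff₀ hlog).1 hεs
  have hNpos : (0 : ℝ) < (coverNumber E ε).toNat := by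
    refine Nat.cast_pos.2 (Nat.pos_of_ne_zero fun h => ?_)
    rw [h, Nat.cast_zero, Real.log_zero] at hsN
    exact (mul_nonneg hs hlog.le).not_gt hsN
  have hmono := toNat_coverNumber_anti E (ε := ((2:ℝ) ^ (k (j + 1) + 1))⁻¹) (by positivity)
    (((inv_anti₀ (by positivity) (pow_le_pow_right₀ one_le_two (Nat.le_succ _)))).trans hj1.le)
  rw [Real.logb, le_div_iff₀ (Real.log_pos one_lt_two)]
  calc s * k j * Real.log 2 = s * (k j * Real.log 2) := by ring
    _ ≤ s * Real.log (1 / ε) := mul_le_mul_of_nonneg_left hlogε hs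
    _ ≤ Real.log (coverNumber E ε).toNat := hsN.le
    _ ≤ _ := Real.log_le_log hNpos (by exact_mod_cast hmono)

end CoverNumber

-- `n_k` in condition (C) is `(dyadicBlock r k).ncard`.
def dyadicBlock (r : ℕ → ℝ) (K : ℕ) : Set ℕ :=
  {n : ℕ | ((2:ℝ) ^ (K + 1))⁻¹ ≤ r n ∧ r n < ((2:ℝ) ^ K)⁻¹}

def IsLowerAhlforsRegular {X : Type*} [MetricSpace X] [MeasurableSpace X] (μ : Measure X)
    (t C : ℝ) : Prop :=
  ∀ (x : X) (ρ : ℝ), 0 < ρ → ρ < diam (univ : Set X) →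
    ENNReal.ofReal (C⁻¹ * ρ ^ t) ≤ μ (closedBall x ρ)

section LowerAhlforsRegular

variable {X : Type*} [MetricSpace X] [CompactSpace X] [MeasurableSpace X] [BorelSpace X]
  {μ : Measure X} {t C : ℝ}

lemma ofReal_coverNumber_mul_le_measure_thickening (hlow : IsLowerAhlforsRegular μ t C)
    (E : Set X) {ρ : ℝ} (hρ : 0 < ρ) (hρd : ρ / 4 < diam (univ : Set X)) :
    ENNReal.ofReal ((coverNumber E ρ).toNat * (C⁻¹ * (ρ / 4) ^ t)) ≤ μ (thickening ρ E) := by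
  obtain ⟨Y, hYE, hYsep, hYcov⟩ := exists_separated_ball_cover E hρ
  have hdisj : (Y : Set X).PairwiseDisjoint fun y => closedBall y (ρ / 4) := fun a ha b hb hab =>
    closedBall_disjoint_closedBall (by linarith [hYsep ha hb hab])
  have hsub : (⋃ y ∈ Y, closedBall y (ρ / 4)) ⊆ thickening ρ E := iUnion₂_subset fun y hy z hz =>
    mem_thickening_iff.2 ⟨y, hYE hy, (mem_closedBall.1 hz).trans_lt (by linarith)⟩
  calc ENNReal.ofReal ((coverNumber E ρ).toNat * (C⁻¹ * (ρ / 4) ^ t))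
      = (coverNumber E ρ).toNat * ENNReal.ofReal (C⁻¹ * (ρ / 4) ^ t) := by
        rw [ENNReal.ofReal_mul (Nat.cast_nonneg _), ENNReal.ofReal_natCast]
    _ ≤ Y.card * ENNReal.ofReal (C⁻¹ * (ρ / 4) ^ t) := by
        gcongr
        exact_mod_cast ENat.toNat_le_of_le_natCast (coverNumber_le_card hYcov)
    _ ≤ ∑ y ∈ Y, μ (closedBall y (ρ / 4)) := by
        rw [← nsmul_eq_mul]
        exact Finset.card_nsmul_le_sum _ _ _ fun y _ => hlow y _ (by linarith) hρd
    _ = μ (⋃ y ∈ Y, closedBall y (ρ / 4)) :=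
        (measure_biUnion_finset hdisj fun _ _ => measurableSet_closedBall).symm
    _ ≤ μ (thickening ρ E) := measure_mono hsub

lemma upperBoxDim_le [IsProbabilityMeasure μ] (hlow : IsLowerAhlforsRegular μ t C) (hC : 0 < C)
    (hdiam : 0 < diam (univ : Set X)) (E : Set X) :
    upperBoxDim E ≤ ENNReal.ofReal t := by
  set A := Real.log C + t * Real.log 4 with hA
  have hlim : Tendsto (fun ε : ℝ => ENNReal.ofReal (A / Real.log (1 / ε) + t)) (𝓝[>] 0)
      (𝓝 (ENNReal.ofReal t)) := by
    have h := (Real.tendsto_log_atTop.comp tendsto_inv_nhdsGT_zero).const_div_atTop A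
    simpa [one_div] using (ENNReal.tendsto_ofReal (h.add_const t))
  refine (limsup_le_limsup ?_).trans_eq hlim.limsup_eq
  filter_upwards [Ioo_mem_nhdsGT (lt_min one_pos (by linarith : (0 : ℝ) < 4 * diam (univ : Set X)))]
    with ε ⟨hε0, hεm⟩
  have hlog : 0 < Real.log (1 / ε) :=
    Real.log_pos (one_lt_one_div hε0 (hεm.trans_le (min_le_left _ _)))
  set N := (coverNumber E ε).toNat
  rcases N.eq_zero_or_pos with hN | hN
  · simp [hN]
  have hpack : (N : ℝ) * (C⁻¹ * (ε / 4) ^ t) ≤ 1 := ENNReal.ofReal_le_one.1 <|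
    (ofReal_coverNumber_mul_le_measure_thickening hlow E hε0 (by
      linarith [hεm.trans_le (min_le_right _ _)])).trans prob_le_one
  have hlogN : Real.log N ≤ A + t * Real.log (1 / ε) := by
    have h := Real.log_le_log (by positivity) hpack
    rw [Real.log_one, Real.log_mul (by positivity) (by positivity), Real.log_mul (by positivity)
      (by positivity), Real.log_inv, Real.log_rpow (by positivity),
      Real.log_div hε0.ne' (by norm_num)] at h
    rw [one_div, Real.log_inv]
    linarith
  gcongr
  rw [div_le_iff₀ hlog, add_mul, div_mul_cancel₀ _ hlog.ne']
  linarith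

lemma ofReal_ncard_mul_le_tsum_measure_thickening (hlow : IsLowerAhlforsRegular μ t C)
    (E : Set X) {r : ℕ → ℝ} {S : Set ℕ} {ρ : ℝ} (hρ : 0 < ρ) (hρd : ρ / 4 < diam (univ : Set X))
    (hS : ∀ n ∈ S, ρ ≤ r n) :
    ENNReal.ofReal (S.ncard * ((coverNumber E ρ).toNat * (C⁻¹ * (ρ / 4) ^ t)))
      ≤ ∑' n, μ (thickening (r n) E) := by
  rw [ENNReal.ofReal_mul (Nat.cast_nonneg _), ENNReal.ofReal_natCast]
  exact ncard_mul_le_tsum fun n hn =>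
    (ofReal_coverNumber_mul_le_measure_thickening hlow E hρ hρd).trans
      (measure_mono (thickening_mono (hS n hn) E))

lemma ofReal_two_rpow_le_tsum_measure_thickening (hlow : IsLowerAhlforsRegular μ t C)
    (E : Set X) {r : ℕ → ℝ} {K : ℕ} (hK : ((2:ℝ) ^ (K + 1))⁻¹ / 4 < diam (univ : Set X))
    (hm : 0 < (dyadicBlock r K).ncard) (hN : 0 < (coverNumber E ((2:ℝ) ^ (K + 1))⁻¹).toNat) :
    ENNReal.ofReal (C⁻¹ * 2 ^ (Real.logb 2 (dyadicBlock r K).ncard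
        + Real.logb 2 (coverNumber E ((2:ℝ) ^ (K + 1))⁻¹).toNat - t * (K + 3)))
      ≤ ∑' n, μ (thickening (r n) E) := by
  refine le_of_eq_of_le ?_ (ofReal_ncard_mul_le_tsum_measure_thickening hlow E
    (S := dyadicBlock r K) (by positivity) hK fun n hn => hn.1)
  have h4 : ((2:ℝ) ^ (K + 1))⁻¹ / 4 = ((2:ℝ) ^ (K + 3 : ℝ))⁻¹ := by
    rw [← Real.rpow_natCast]
    push_cast
    rw [Real.rpow_add two_pos, Real.rpow_add two_pos, Real.rpow_natCast]
    norm_num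
    ring_nf
  rw [Real.rpow_sub two_pos, Real.rpow_add two_pos, Real.rpow_logb two_pos (by norm_num)
    (by exact_mod_cast hm), Real.rpow_logb two_pos (by norm_num) (by exact_mod_cast hN), h4,
    Real.inv_rpow (by positivity), ← Real.rpow_mul zero_le_two, mul_comm t]
  ring_nf

lemma tsum_measure_thickening_eq_top (hlow : IsLowerAhlforsRegular μ t C) (hC : 0 < C)
    (hdiam : 0 < diam (univ : Set X)) {r : ℕ → ℝ} {α : ℝ} (hα : 0 < α) (hαt : α ≤ t)
    {k : ℕ → ℕ} (hk : StrictMono k)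
    (hkratio : Tendsto (fun i => (k (i + 1) : ℝ) / (k i : ℝ)) atTop (𝓝 1))
    (hkcount : Tendsto (fun i => Real.logb 2 ((dyadicBlock r (k i)).ncard : ℝ) / (k i : ℝ))
      atTop (𝓝 α))
    {E : Set X} (hE : ENNReal.ofReal (t - α) < upperBoxDim E) :
    ∑' n, μ (thickening (r n) E) = ∞ := by
  obtain ⟨c, htc, hcE⟩ := exists_between hE
  obtain ⟨s, hts, hsc⟩ := exists_between
    ((ENNReal.ofReal_lt_iff_lt_toReal (sub_nonneg.2 hαt) hcE.ne_top).1 htc)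
  have hb : ∃ᶠ j in atTop,
      s * k j ≤ Real.logb 2 (coverNumber E ((2:ℝ) ^ (k j + 1))⁻¹).toNat :=
    frequently_mul_le_of_tendsto_ratio hkratio (by linarith) hsc
      (frequently_mul_le_logb_coverNumber ENNReal.toReal_nonneg
        (by rwa [ENNReal.ofReal_toReal hcE.ne_top]) hk.tendsto_atTop)
  have hdiam_ev : ∀ᶠ j in atTop, ((2:ℝ) ^ (k j + 1))⁻¹ / 4 < diam (univ : Set X) := by
    have h := (tendsto_inv_two_pow_comp
      ((tendsto_add_atTop_nat 1).comp hk.tendsto_atTop)).div_const 4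
    rw [zero_div] at h
    exact h.eventually (gt_mem_nhds hdiam)
  have hbound : ∀ M : ℝ,
      ENNReal.ofReal (C⁻¹ * 2 ^ (M - 3 * t)) ≤ ∑' n, μ (thickening (r n) E) := by
    intro M
    obtain ⟨j, ⟨ha0, hb0, hMj⟩, hdj⟩ := ((frequently_le_add_sub_mul (t := t)
      (κ := fun j => (k j : ℝ)) (tendsto_natCast_atTop_atTop.comp hk.tendsto_atTop) hkcount hα
      (by linarith) hb (by linarith) M).and_eventually hdiam_ev).exists
    have hm : 0 < (dyadicBlock r (k j)).ncard := Nat.pos_of_ne_zero fun h => by simp [h] at ha0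
    have hN : 0 < (coverNumber E ((2:ℝ) ^ (k j + 1))⁻¹).toNat :=
      Nat.pos_of_ne_zero fun h => by simp [h] at hb0
    refine le_trans ?_ (ofReal_two_rpow_le_tsum_measure_thickening hlow E hdj hm hN)
    refine ENNReal.ofReal_le_ofReal (mul_le_mul_of_nonneg_left
      (Real.rpow_le_rpow_of_exponent_le one_le_two ?_) (inv_nonneg.2 hC.le))
    linarith
  have hlim : Tendsto (fun M : ℝ => ENNReal.ofReal (C⁻¹ * 2 ^ (M - 3 * t))) atTop (𝓝 ∞) :=
    ENNReal.tendsto_ofReal_atTop.comp (((tendsto_rpow_atTop_of_base_gt_one 2 one_lt_two).comp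
      (tendsto_atTop_add_const_right _ _ tendsto_id)).const_mul_atTop (inv_pos.2 hC))
  exact top_unique (le_of_tendsto' hlim hbound)

end LowerAhlforsRegular

lemma tsum_measure_thickening_eq_top_of_subsingleton {X : Type*} [MetricSpace X] [Subsingleton X]
    [MeasurableSpace X] {μ : Measure X} [IsProbabilityMeasure μ] {r : ℕ → ℝ} (hr : ∀ n, 0 < r n)
    {E : Set X} (hE : E.Nonempty) : ∑' n, μ (thickening (r n) E) = ∞ := by
  obtain ⟨z, hz⟩ := hE
  have huniv : ∀ n, thickening (r n) E = univ := fun n => eq_univ_of_forall fun y =>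
    self_subset_thickening (hr n) E (Subsingleton.elim z y ▸ hz)
  simp [huniv]

lemma ae_frequently_mem_of_tsum_eq_top {Ω β : Type*} [MeasurableSpace Ω] [MeasurableSpace β]
    {P : Measure Ω} [IsProbabilityMeasure P] {x : ℕ → Ω → β} (hmeas : ∀ n, Measurable (x n))
    (hindep : iIndepFun x P) {T : ℕ → Set β} (hT : ∀ n, MeasurableSet (T n))
    (hsum : ∑' n, P (x n ⁻¹' T n) = ∞) :
    ∀ᵐ ω ∂P, ∃ᶠ n in atTop, x n ω ∈ T n := by
  have hA : ∀ n, MeasurableSet (x n ⁻¹' T n) := fun n => hmeas n (hT n)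
  have hAindep : iIndepSet (fun n => x n ⁻¹' T n) P :=
    (iIndepSet_iff_meas_biInter hA).2 fun S =>
      hindep.measure_inter_preimage_eq_mul S fun n _ => hT n
  have hlimsup : ∀ᵐ ω ∂P, ω ∈ limsup (fun n => x n ⁻¹' T n) atTop :=
    (ae_mem_iff_measure_eq (MeasurableSet.measurableSet_limsup hA).nullMeasurableSet).2 <| by
      rw [measure_univ, measure_limsup_eq_one hA hAindep hsum]
  filter_upwards [hlimsup] with ω hω using mem_limsup_iff_frequently_mem.1 hω

lemma ae_forall_isOpen_infinite_ball_inter {X Ω : Type*} [MetricSpace X]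
    [SecondCountableTopology X] [MeasurableSpace X] [OpensMeasurableSpace X]
    [MeasurableSpace Ω] {μ : Measure X} {P : Measure Ω} [IsProbabilityMeasure P]
    {x : ℕ → Ω → X} (hmeas : ∀ n, Measurable (x n)) (hindep : iIndepFun x P)
    (hlaw : ∀ n, Measure.map (x n) P = μ) {r : ℕ → ℝ} {F : Set X}
    (hsum : ∀ V : Set X, IsOpen V → (V ∩ F).Nonempty → ∑' n, μ (thickening (r n) (V ∩ F)) = ∞) :
    ∀ᵐ ω ∂P, ∀ V : Set X, IsOpen V → (V ∩ F).Nonempty →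
      {n : ℕ | (ball (x n ω) (r n) ∩ (V ∩ F)).Nonempty}.Infinite := by
  have hbasis := TopologicalSpace.isBasis_countableBasis X
  have hae : ∀ b ∈ TopologicalSpace.countableBasis X, ∀ᵐ ω ∂P,
      (b ∩ F).Nonempty → ∃ᶠ n in atTop, x n ω ∈ thickening (r n) (b ∩ F) := by
    intro b hb
    by_cases hbF : (b ∩ F).Nonempty
    · have hT : ∀ n, MeasurableSet (thickening (r n) (b ∩ F)) := fun n =>
        isOpen_thickening.measurableSet
      have hsumP : ∑' n, P (x n ⁻¹' thickening (r n) (b ∩ F)) = ∞ := by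
        simpa only [← Measure.map_apply (hmeas _) (hT _), hlaw] using hsum b (hbasis.isOpen hb) hbF
      filter_upwards [ae_frequently_mem_of_tsum_eq_top hmeas hindep hT hsumP] with ω hω _ using hω
    · exact ae_of_all _ fun _ h => absurd h hbF
  filter_upwards [(ae_ball_iff (TopologicalSpace.countable_countableBasis X)).2 hae]
    with ω hω V hV ⟨z, hzV, hzF⟩
  obtain ⟨b, hb, hzb, hbV⟩ := hbasis.exists_subset_of_mem_open hzV hV
  refine Nat.frequently_atTop_iff_infinite.1 ((hω b hb ⟨z, hzb, hzF⟩).mono fun n hn => ?_)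
  obtain ⟨y, hy, hxy⟩ := mem_thickening_iff.1 hn
  exact ⟨y, mem_ball'.2 hxy, hbV hy.1, hy.2⟩

theorem covering_hits_infinitely_often_general
    {X : Type*} [MetricSpace X] [CompactSpace X] [MeasurableSpace X] [BorelSpace X]
    (μ : Measure X) [IsProbabilityMeasure μ] (t C : ℝ) (hC : 1 ≤ C)
    (hreg : ∀ (x : X) (ρ : ℝ), 0 < ρ → ρ < Metric.diam (Set.univ : Set X) →
      ENNReal.ofReal (C⁻¹ * ρ ^ t) ≤ μ (closedBall x ρ) ∧
      μ (closedBall x ρ) ≤ ENNReal.ofReal (C * ρ ^ t))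
    (r : ℕ → ℝ) (hrpos : ∀ n, 0 < r n)
    (α : ℝ)
    (hα : α = min t (Filter.limsup (fun n : ℕ => Real.log n / (- Real.log (r n))) atTop))
    (F : Set X)
    (hdim : ∀ V : Set X, IsOpen V → (V ∩ F).Nonempty →
      ENNReal.ofReal (t - α) < upperBoxDim (V ∩ F))
    (k : ℕ → ℕ) (hk : StrictMono k)
    (hkratio : Tendsto (fun i => (k (i + 1) : ℝ) / (k i : ℝ)) atTop (nhds 1))
    (hkcount : Tendsto
      (fun i => Real.logb 2
          ((Set.ncard {n : ℕ | ((2:ℝ) ^ (k i + 1))⁻¹ ≤ r n ∧ r n < ((2:ℝ) ^ (k i))⁻¹} : ℝ))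
        / (k i : ℝ)) atTop (nhds α))
    {Ω : Type*} [MeasurableSpace Ω] (P : Measure Ω) [IsProbabilityMeasure P]
    (x : ℕ → Ω → X) (hmeas : ∀ n, Measurable (x n))
    (hindep : iIndepFun x P)
    (hlaw : ∀ n, Measure.map (x n) P = μ) :
    ∀ᵐ ω ∂P, ∀ V : Set X, IsOpen V → (V ∩ F).Nonempty →
      {n : ℕ | (Metric.ball (x n ω) (r n) ∩ (V ∩ F)).Nonempty}.Infinite := by
  refine ae_forall_isOpen_infinite_ball_inter hmeas hindep hlaw fun V hV hVF => ?_
  rcases subsingleton_or_nontrivial X with hX | hX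
  · exact tsum_measure_thickening_eq_top_of_subsingleton hrpos hVF
  have hdiam : 0 < diam (univ : Set X) :=
    diam_pos nontrivial_univ isCompact_univ.isBounded
  have hlow : IsLowerAhlforsRegular μ t C := fun y ρ hρ hρd => (hreg y ρ hρ hρd).1
  have hC0 : 0 < C := by linarith
  have hαt : α ≤ t := hα ▸ min_le_left _ _
  have hα0 : 0 < α := by
    refine (ge_of_tendsto' hkcount fun i => div_nonneg ?_ (Nat.cast_nonneg _)).lt_of_ne ?_
    · exact div_nonneg (Real.log_natCast_nonneg _) (Real.log_nonneg one_le_two)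
    · rintro rfl
      exact (hdim V hV hVF).not_ge (by simpa using upperBoxDim_le hlow hC0 hdiam (V ∩ F))
  exact tsum_measure_thickening_eq_top hlow hC0 hdiam hα0 hαt hk hkratio hkcount (hdim V hV hVF)

/-- Let `(X, ρ, μ)` be a compact Ahlfors `t`-regular metric probability space, `(r n)`
decreasing to `0`, and `x n` i.i.d. with law `μ`.  Suppose `F ⊆ X` is compact and
`dim_B (V ∩ F) > t - α` for every open `V` meeting `F`, where
`α = min {t, limsup (log n)/(-log r n)}`, and suppose condition (C) holds: there is an
increasing sequence `(k i)` of positive integers with `k (i+1) / k i → 1` and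
`log₂ n_{k i} / k i → α`, where `n_k = #{n : 2^{-(k+1)} ≤ r n < 2^{-k}}`.  Then almost
surely, for every open `V` meeting `F`, the open ball `U(xₙ, rₙ)` intersects `V ∩ F` for
infinitely many `n`. -/
theorem covering_hits_infinitely_often
    {X : Type*} [MetricSpace X] [CompactSpace X] [MeasurableSpace X] [BorelSpace X]
    (μ : Measure X) [IsProbabilityMeasure μ] (t C : ℝ) (ht : 0 < t) (hC : 1 ≤ C)
    (hreg : ∀ (x : X) (ρ : ℝ), 0 < ρ → ρ < Metric.diam (Set.univ : Set X) →
      ENNReal.ofReal (C⁻¹ * ρ ^ t) ≤ μ (closedBall x ρ) ∧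
      μ (closedBall x ρ) ≤ ENNReal.ofReal (C * ρ ^ t))
    (r : ℕ → ℝ) (hrpos : ∀ n, 0 < r n) (hrmono : Antitone r)
    (hrlim : Tendsto r atTop (nhds 0))
    (α : ℝ)
    (hα : α = min t (Filter.limsup (fun n : ℕ => Real.log n / (- Real.log (r n))) atTop))
    (F : Set X) (hF : IsCompact F)
    (hdim : ∀ V : Set X, IsOpen V → (V ∩ F).Nonempty →
      ENNReal.ofReal (t - α) < upperBoxDim (V ∩ F))
    (k : ℕ → ℕ) (hk : StrictMono k) (hkpos : ∀ i, 0 < k i)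
    (hkratio : Tendsto (fun i => (k (i + 1) : ℝ) / (k i : ℝ)) atTop (nhds 1))
    (hkcount : Tendsto
      (fun i => Real.logb 2
          ((Set.ncard {n : ℕ | ((2:ℝ) ^ (k i + 1))⁻¹ ≤ r n ∧ r n < ((2:ℝ) ^ (k i))⁻¹} : ℝ))
        / (k i : ℝ)) atTop (nhds α))
    {Ω : Type*} [MeasurableSpace Ω] (P : Measure Ω) [IsProbabilityMeasure P]
    (x : ℕ → Ω → X) (hmeas : ∀ n, Measurable (x n))
    (hindep : iIndepFun x P)
    (hlaw : ∀ n, Measure.map (x n) P = μ) :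
    ∀ᵐ ω ∂P, ∀ V : Set X, IsOpen V → (V ∩ F).Nonempty →
      {n : ℕ | (Metric.ball (x n ω) (r n) ∩ (V ∩ F)).Nonempty}.Infinite :=
  covering_hits_infinitely_often_general μ t C hC hreg r hrpos α hα F hdim k hk hkratio hkcount P x
    hmeas hindep hlaw
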